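/- arXiv:1002.3381 — 4 statements merged into one kernel-verified Lean document; each statement's English description precedes it below -/
import Mathlib

section
/- For every multi-index α with |α| ≥ 1, the partial derivative D^α R(a) of the gluing length R(a) = e^{1/|a|} - e, at points 0 < |a| < 1, is a linear combination of terms of the form e^{1/|a|} · a^β / |a|^k with k ≤ 3|α| and |β| ≤ |α|. In particular there exists a constant C with |D^α R(a)| ≤ C·R(a)·(ln R(a))^{2|α|} for 0 < |a| < 1/2. -/
/-!
Write `r = |a|` and call `e^{1/r} x^b y^e / r^k` an exponential monomial. By the product rule,
`∂_x` of it is `b·(b-1, e, k) - (b+1, e, k+3) - k·(b+1, e, k+2)` and symmetrically for `∂_y`, so the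
span of the monomials with `k ≤ 3n`, `b + e ≤ n` and `k ≤ b + e + 2n` is mapped by a partial
derivative into the corresponding span for `n + 1`; since `R = e^{1/r} - e` differs from the
monomial `(0, 0, 0)` by a constant, `D^α R` lies in the span for `n = |α|`. The last constraint
bounds every such monomial by `e^{1/r} / r^{2n}` when `r ≤ 1`, and for `r < 1/2` one has
`R ≥ e^{1/r}/2` and `ln R ≥ 1/(2r)`, whence `e^{1/r} / r^{2n} ≤ 2^{2n+1} R (ln R)^{2n}`.
-/

/-- Partial derivative of `f : ℂ → ℝ` in the (real) direction `w`. -/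
noncomputable def pdC (w : ℂ) (f : ℂ → ℝ) : ℂ → ℝ := fun a => fderiv ℝ f a w

/-- Iterated partial derivative `D^α = ∂_x^{α₁} ∂_y^{α₂}` for a multi-index `α`. -/
noncomputable def DmixC (α : ℕ × ℕ) (f : ℂ → ℝ) : ℂ → ℝ :=
  (pdC 1)^[α.1] ((pdC Complex.I)^[α.2] f)

/-- The gluing length `R(a) = e^{1/|a|} - e`. -/
noncomputable def gluingLength (a : ℂ) : ℝ :=
  Real.exp (1 / ‖a‖) - Real.exp 1

open Set Submodule

lemma hasFDerivAt_norm_of_ne_zero {a : ℂ} (ha : a ≠ 0) :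
    HasFDerivAt (‖·‖ : ℂ → ℝ) (‖a‖⁻¹ • innerSL ℝ a) a := by
  have h := (hasStrictFDerivAt_norm_sq a).hasFDerivAt.sqrt (by positivity)
  simp only [Real.sqrt_sq (norm_nonneg _)] at h
  refine h.congr_fderiv ?_
  ext w
  simp only [smul_apply, coe_innerSL_apply, Complex.inner, Complex.mul_re,
    Complex.conj_re, Complex.conj_im, nsmul_eq_mul, Nat.cast_ofNat, smul_eq_mul]
  field_simp

noncomputable def expMonomial (b e k : ℕ) (a : ℂ) : ℝ :=
  Real.exp (1 / ‖a‖) * a.re ^ b * a.im ^ e / ‖a‖ ^ k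

-- At `b = 0` the truncated exponent `b - 1` is harmless: its coefficient is `0`.
noncomputable def expMonomialPartialRe (b e k : ℕ) : ℂ → ℝ :=
  (b : ℝ) • expMonomial (b - 1) e k - expMonomial (b + 1) e (k + 3) -
    (k : ℝ) • expMonomial (b + 1) e (k + 2)

noncomputable def expMonomialPartialIm (b e k : ℕ) : ℂ → ℝ :=
  (e : ℝ) • expMonomial b (e - 1) k - expMonomial b (e + 1) (k + 3) -
    (k : ℝ) • expMonomial b (e + 1) (k + 2)

lemma hasFDerivAt_expMonomial (b e k : ℕ) {a : ℂ} (ha : a ≠ 0) :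
    HasFDerivAt (expMonomial b e k)
      (expMonomialPartialRe b e k a • Complex.reCLM +
        expMonomialPartialIm b e k a • Complex.imCLM) a := by
  have hr : ‖a‖ ≠ 0 := norm_ne_zero_iff.mpr ha
  have hnorm := hasFDerivAt_norm_of_ne_zero ha
  have hexp := ((hasDerivAt_inv hr).comp_hasFDerivAt a hnorm).exp
  have hre := (hasDerivAt_pow b a.re).comp_hasFDerivAt a Complex.reCLM.hasFDerivAt
  have him := (hasDerivAt_pow e a.im).comp_hasFDerivAt a Complex.imCLM.hasFDerivAt
  have hpow := ((hasDerivAt_pow k ‖a‖).inv (pow_ne_zero k hr)).comp_hasFDerivAt a hnorm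
  have H := ((hexp.fun_mul hre).fun_mul him).fun_mul hpow
  have hfun : expMonomial b e k =
      fun z => Real.exp ‖z‖⁻¹ * z.re ^ b * z.im ^ e * (‖z‖ ^ k)⁻¹ := by
    funext z; simp [expMonomial, div_eq_mul_inv]
  rw [hfun]
  refine H.congr_fderiv ?_
  ext w
  simp only [Function.comp_apply, Pi.inv_apply, add_apply, smul_apply, neg_apply,
    coe_innerSL_apply, Complex.inner, Complex.mul_re, Complex.conj_re, Complex.conj_im,
    Complex.reCLM_apply, Complex.imCLM_apply, expMonomialPartialRe, expMonomialPartialIm, expMonomial, Pi.sub_apply,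
    Pi.smul_apply, smul_eq_mul, smul_add, smul_neg, neg_smul]
  rcases k with _ | k
  · field_simp
    ring
  · simp only [Nat.add_sub_cancel]
    field_simp
    ring

lemma pdC_expMonomial (b e k : ℕ) (w : ℂ) :
    EqOn (pdC w (expMonomial b e k))
      (w.re • expMonomialPartialRe b e k + w.im • expMonomialPartialIm b e k) {0}ᶜ := by
  intro a ha
  simp [pdC, (hasFDerivAt_expMonomial b e k ha).fderiv, mul_comm]

lemma differentiableAt_expMonomial (b e k : ℕ) {a : ℂ} (ha : a ≠ 0) :
    DifferentiableAt ℝ (expMonomial b e k) a :=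
  (hasFDerivAt_expMonomial b e k ha).differentiableAt

def expMonomialSet (n : ℕ) : Set (ℂ → ℝ) :=
  {f | ∃ b e k, k ≤ 3 * n ∧ b + e ≤ n ∧ k ≤ b + e + 2 * n ∧ f = expMonomial b e k}

noncomputable def expPolySpace (n : ℕ) : Submodule ℝ (ℂ → ℝ) :=
  span ℝ (expMonomialSet n)

lemma expMonomial_mem_expPolySpace {n b e k : ℕ} (hk : k ≤ 3 * n) (hbe : b + e ≤ n)
    (hkbe : k ≤ b + e + 2 * n) : expMonomial b e k ∈ expPolySpace n :=
  subset_span ⟨b, e, k, hk, hbe, hkbe, rfl⟩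

lemma differentiableAt_of_mem_expPolySpace {n : ℕ} {g : ℂ → ℝ} (hg : g ∈ expPolySpace n)
    {a : ℂ} (ha : a ≠ 0) : DifferentiableAt ℝ g a := by
  induction hg using span_induction with
  | mem f hf =>
    obtain ⟨b, e, k, -, -, -, rfl⟩ := hf
    exact differentiableAt_expMonomial b e k ha
  | zero => exact differentiableAt_const 0
  | add f g _ _ hf hg => exact hf.add hg
  | smul c f _ hf => exact hf.const_smul c

lemma exists_eqOn_pdC_of_mem_expPolySpace {n : ℕ} {g : ℂ → ℝ} (hg : g ∈ expPolySpace n)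
    (w : ℂ) : ∃ g' ∈ expPolySpace (n + 1), EqOn (pdC w g) g' {0}ᶜ := by
  induction hg using span_induction with
  | mem f hf =>
    obtain ⟨b, e, k, hk, hbe, hkbe, rfl⟩ := hf
    refine ⟨_, ?_, pdC_expMonomial b e k w⟩
    refine add_mem (smul_mem _ _ ?_) (smul_mem _ _ ?_)
    · refine sub_mem (sub_mem (smul_mem _ _ ?_) ?_) (smul_mem _ _ ?_) <;>
        exact expMonomial_mem_expPolySpace (by omega) (by omega) (by omega)
    · refine sub_mem (sub_mem (smul_mem _ _ ?_) ?_) (smul_mem _ _ ?_) <;>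
        exact expMonomial_mem_expPolySpace (by omega) (by omega) (by omega)
  | zero => exact ⟨0, zero_mem _, fun a _ => by simp [pdC]⟩
  | add f g hf hg ihf ihg =>
    obtain ⟨f', hf', hff'⟩ := ihf
    obtain ⟨g', hg', hgg'⟩ := ihg
    refine ⟨f' + g', add_mem hf' hg', fun a ha => ?_⟩
    simp [pdC, fderiv_add (differentiableAt_of_mem_expPolySpace hf ha)
      (differentiableAt_of_mem_expPolySpace hg ha), ← hff' ha, ← hgg' ha]
  | smul c f hf ihf =>
    obtain ⟨f', hf', hff'⟩ := ihf
    refine ⟨c • f', smul_mem _ c hf', fun a ha => ?_⟩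
    simp [pdC, fderiv_const_smul (differentiableAt_of_mem_expPolySpace hf ha), ← hff' ha]

def IsExpPoly (n : ℕ) (f : ℂ → ℝ) : Prop :=
  ∃ g ∈ expPolySpace n, EqOn f g {0}ᶜ

lemma pdC_congr_of_eqOn {f g : ℂ → ℝ} {s : Set ℂ} (hs : IsOpen s) (h : EqOn f g s) (w : ℂ) :
    EqOn (pdC w f) (pdC w g) s := fun a ha => by
  simp only [pdC, (h.eventuallyEq_of_mem (hs.mem_nhds ha)).fderiv_eq]

lemma isExpPoly_pdC {n : ℕ} {f : ℂ → ℝ} (h : IsExpPoly n f) (w : ℂ) :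
    IsExpPoly (n + 1) (pdC w f) := by
  obtain ⟨g, hg, hfg⟩ := h
  obtain ⟨g', hg', hgg'⟩ := exists_eqOn_pdC_of_mem_expPolySpace hg w
  exact ⟨g', hg', (pdC_congr_of_eqOn isOpen_compl_singleton hfg w).trans hgg'⟩

lemma isExpPoly_iterate_pdC {n : ℕ} {f : ℂ → ℝ} (h : IsExpPoly n f) (w : ℂ) (m : ℕ) :
    IsExpPoly (n + m) ((pdC w)^[m] f) := by
  induction m with
  | zero => exact h
  | succ m ih => rw [Function.iterate_succ_apply']; exact isExpPoly_pdC ih w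

lemma isExpPoly_DmixC {n : ℕ} {f : ℂ → ℝ} (h : IsExpPoly n f) (α : ℕ × ℕ) :
    IsExpPoly (n + (α.1 + α.2)) (DmixC α f) := by
  rw [add_comm α.1, ← add_assoc]
  exact isExpPoly_iterate_pdC (isExpPoly_iterate_pdC h Complex.I α.2) 1 α.1

lemma pdC_sub_const (w : ℂ) (f : ℂ → ℝ) (c : ℝ) : pdC w (fun a => f a - c) = pdC w f := by
  funext a; simp only [pdC, fderiv_sub_const]

lemma DmixC_sub_const {α : ℕ × ℕ} (hα : 1 ≤ α.1 + α.2) (f : ℂ → ℝ) (c : ℝ) :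
    DmixC α (fun a => f a - c) = DmixC α f := by
  obtain ⟨i, _ | j⟩ := α
  · obtain _ | i := i
    · omega
    · simp only [DmixC, Function.iterate_zero_apply, Function.iterate_succ_apply, pdC_sub_const]
  · simp only [DmixC, Function.iterate_succ_apply, pdC_sub_const]

lemma isExpPoly_DmixC_gluingLength {α : ℕ × ℕ} (hα : 1 ≤ α.1 + α.2) :
    IsExpPoly (α.1 + α.2) (DmixC α gluingLength) := by
  have hR : gluingLength = fun a => expMonomial 0 0 0 a - Real.exp 1 := by
    funext a; simp [gluingLength, expMonomial]
  have h0 : IsExpPoly 0 (expMonomial 0 0 0) :=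
    ⟨_, expMonomial_mem_expPolySpace le_rfl le_rfl le_rfl, eqOn_refl _ _⟩
  rw [hR, DmixC_sub_const hα]
  simpa using isExpPoly_DmixC h0 α

lemma exists_sum_of_mem_expPolySpace {n : ℕ} {g : ℂ → ℝ} (hg : g ∈ expPolySpace n) :
    ∃ (N : ℕ) (c : Fin N → ℝ) (k : Fin N → ℕ) (β : Fin N → ℕ × ℕ),
      (∀ j, k j ≤ 3 * n ∧ (β j).1 + (β j).2 ≤ n) ∧
      ∀ a : ℂ, g a = ∑ j : Fin N, c j * Real.exp (1 / ‖a‖) *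
        a.re ^ (β j).1 * a.im ^ (β j).2 / ‖a‖ ^ k j := by
  obtain ⟨N, c, m, rfl⟩ := mem_span_set'.mp hg
  choose b e k hk hbe _ hm using fun j => (m j).2
  refine ⟨N, c, k, fun j => (b j, e j), fun j => ⟨hk j, hbe j⟩, fun a => ?_⟩
  simp only [Finset.sum_apply, Pi.smul_apply, hm, expMonomial, smul_eq_mul, mul_div_assoc,
    mul_assoc]

lemma abs_expMonomial_le {n b e k : ℕ} (hkbe : k ≤ b + e + 2 * n) {a : ℂ} (h0 : 0 < ‖a‖)
    (h1 : ‖a‖ ≤ 1) :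
    |expMonomial b e k a| ≤ Real.exp (1 / ‖a‖) / ‖a‖ ^ (2 * n) := by
  have hmono : |a.re| ^ b * |a.im| ^ e * ‖a‖ ^ (2 * n) ≤ ‖a‖ ^ k :=
    calc |a.re| ^ b * |a.im| ^ e * ‖a‖ ^ (2 * n)
        ≤ ‖a‖ ^ b * ‖a‖ ^ e * ‖a‖ ^ (2 * n) := by
          gcongr
          exacts [Complex.abs_re_le_norm a, Complex.abs_im_le_norm a]
      _ = ‖a‖ ^ (b + e + 2 * n) := by ring
      _ ≤ ‖a‖ ^ k := pow_le_pow_of_le_one h0.le h1 hkbe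
  rw [expMonomial, abs_div, abs_mul, abs_mul, abs_pow, abs_pow, abs_of_pos (Real.exp_pos _),
    abs_of_pos (pow_pos h0 k), div_le_div_iff₀ (pow_pos h0 k) (pow_pos h0 _), mul_assoc,
    mul_assoc]
  exact mul_le_mul_of_nonneg_left (by rwa [← mul_assoc]) (Real.exp_pos _).le

lemma exists_abs_le_of_mem_expPolySpace {n : ℕ} {g : ℂ → ℝ} (hg : g ∈ expPolySpace n) :
    ∃ C, 0 ≤ C ∧ ∀ a : ℂ, 0 < ‖a‖ → ‖a‖ ≤ 1 →
      |g a| ≤ C * (Real.exp (1 / ‖a‖) / ‖a‖ ^ (2 * n)) := by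
  induction hg using span_induction with
  | mem f hf =>
    obtain ⟨b, e, k, -, -, hkbe, rfl⟩ := hf
    exact ⟨1, zero_le_one, fun a h0 h1 => by simpa using abs_expMonomial_le hkbe h0 h1⟩
  | zero => exact ⟨0, le_rfl, fun a _ _ => by simp⟩
  | add f g _ _ ihf ihg =>
    obtain ⟨C, hC, hf⟩ := ihf
    obtain ⟨D, hD, hg⟩ := ihg
    refine ⟨C + D, add_nonneg hC hD, fun a h0 h1 => ?_⟩
    calc |(f + g) a| ≤ |f a| + |g a| := abs_add_le _ _
      _ ≤ _ := by rw [add_mul]; exact add_le_add (hf a h0 h1) (hg a h0 h1)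
  | smul c f _ ihf =>
    obtain ⟨C, hC, hf⟩ := ihf
    refine ⟨|c| * C, by positivity, fun a h0 h1 => ?_⟩
    rw [Pi.smul_apply, smul_eq_mul, abs_mul, mul_assoc]
    exact mul_le_mul_of_nonneg_left (hf a h0 h1) (abs_nonneg c)

lemma exp_inv_div_pow_le (n : ℕ) {r : ℝ} (h0 : 0 < r) (h2 : r < 1 / 2) :
    Real.exp (1 / r) / r ^ (2 * n) ≤
      2 ^ (2 * n + 1) * (Real.exp (1 / r) - Real.exp 1) *
        Real.log (Real.exp (1 / r) - Real.exp 1) ^ (2 * n) := by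
  have h2r : 2 ≤ 1 / r := by rw [le_div_iff₀ h0]; linarith
  have hR : Real.exp (1 / r) / 2 ≤ Real.exp (1 / r) - Real.exp 1 := by
    have he : 2 ≤ Real.exp 1 := by linarith [Real.add_one_le_exp 1]
    have : Real.exp 1 * 2 ≤ Real.exp (1 / r) :=
      calc Real.exp 1 * 2 ≤ Real.exp 1 * Real.exp 1 := by gcongr
        _ = Real.exp 2 := by rw [← Real.exp_add]; norm_num
        _ ≤ Real.exp (1 / r) := Real.exp_le_exp.mpr h2r
    linarith
  have hlog : 1 / (2 * r) ≤ Real.log (Real.exp (1 / r) - Real.exp 1) :=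
    calc 1 / (2 * r) ≤ 1 / r - Real.log 2 := by
          have : 1 / r = 1 / (2 * r) + 1 / (2 * r) := by field_simp; ring
          linarith [Real.log_le_sub_one_of_pos (zero_lt_two' ℝ)]
      _ = Real.log (Real.exp (1 / r) / 2) := by
          rw [Real.log_div (Real.exp_pos _).ne' two_ne_zero, Real.log_exp]
      _ ≤ _ := Real.log_le_log (by positivity) hR
  have hRpos : 0 ≤ Real.exp (1 / r) - Real.exp 1 := le_trans (by positivity) hR
  calc Real.exp (1 / r) / r ^ (2 * n)
      = 2 ^ (2 * n + 1) * (Real.exp (1 / r) / 2) * (1 / (2 * r)) ^ (2 * n) := by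
        rw [div_pow, one_pow, mul_pow, pow_succ]; field_simp
    _ ≤ _ := by gcongr

/-- For every multi-index `α` with `|α| ≥ 1`, the derivative `D^α R(a)` is, on
`0 < |a| < 1`, a linear combination of terms `e^{1/|a|}·a^β/|a|^k` with
`k ≤ 3|α|` and `|β| ≤ |α|`; in particular `|D^α R(a)| ≤ C·R(a)·(ln R(a))^{2|α|}`
for `0 < |a| < 1/2`. -/
theorem stmt2 (α : ℕ × ℕ) (hα : 1 ≤ α.1 + α.2) :
    (∃ (n : ℕ) (c : Fin n → ℝ) (k : Fin n → ℕ) (β : Fin n → ℕ × ℕ),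
      (∀ j, k j ≤ 3 * (α.1 + α.2) ∧ (β j).1 + (β j).2 ≤ α.1 + α.2) ∧
      ∀ a : ℂ, 0 < ‖a‖ → ‖a‖ < 1 →
        DmixC α gluingLength a =
          ∑ j : Fin n, c j * Real.exp (1 / ‖a‖) *
            a.re ^ (β j).1 * a.im ^ (β j).2 / ‖a‖ ^ k j) ∧
    ∃ C : ℝ, ∀ a : ℂ, 0 < ‖a‖ → ‖a‖ < 1 / 2 →
      |DmixC α gluingLength a| ≤
        C * gluingLength a * Real.log (gluingLength a) ^ (2 * (α.1 + α.2)) := by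
  obtain ⟨g, hg, hDg⟩ := isExpPoly_DmixC_gluingLength hα
  have hne {a : ℂ} (h0 : 0 < ‖a‖) : a ∈ ({0}ᶜ : Set ℂ) := norm_pos_iff.mp h0
  constructor
  · obtain ⟨N, c, k, β, hbound, hsum⟩ := exists_sum_of_mem_expPolySpace hg
    exact ⟨N, c, k, β, hbound, fun a h0 _ => (hDg (hne h0)).trans (hsum a)⟩
  · obtain ⟨C, hC, hgC⟩ := exists_abs_le_of_mem_expPolySpace hg
    refine ⟨C * 2 ^ (2 * (α.1 + α.2) + 1), fun a h0 h2 => ?_⟩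
    rw [hDg (hne h0)]
    calc |g a| ≤ C * (Real.exp (1 / ‖a‖) / ‖a‖ ^ (2 * (α.1 + α.2))) := hgC a h0 (by linarith)
      _ ≤ C * (2 ^ (2 * (α.1 + α.2) + 1) * gluingLength a *
            Real.log (gluingLength a) ^ (2 * (α.1 + α.2))) :=
          mul_le_mul_of_nonneg_left (exp_inv_div_pow_le _ h0 h2) hC
      _ = _ := by ring
end

section
/- Let (Eₘ) be a nested sequence of Banach spaces E = E₀ ⊃ E₁ ⊃ ... with compact inclusion Eₘ₊₁ → Eₘ, and similarly (Fₘ). Let U ⊂ E be open. Suppose f:U → F is sc⁰ and of class sc¹ (i.e., for each x ∈ U₁ there is a bounded linear Df(x):E₀ → F₀ such that |f(x+h)-f(x)-Df(x)h|₀ = o(|h|₁) and the tangent map Tf(x,h)=(f(x),Df(x)h) is sc⁰). Then for every m ≥ 1 the induced map f:Uₘ → F_{m-1} is continuously Fréchet differentiable (of class C¹), with derivative df(x) = Df(x)|_{Eₘ}. -/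
/-! The derivative at level `m` comes from the mean-value identity
`f (x + h) - f x = ∫₀¹ Df (x + t h) h dt`, taken in `F m`. On level `0` it is the fundamental
theorem of calculus. It climbs from level `m` to level `m + 1` because the inclusion
`F (m + 1) → F m` is injective and commutes with the integral, whose integrand is continuous in
`F (m + 1)` by sc⁰-continuity of the tangent map.

The restriction `x ↦ Df x ∘ ι` is continuous in the operator norm because `ι : E (m + 1) → E m`
is compact: the continuity of `(x, v) ↦ Df x v` is uniform for `v` in the compact set containing
the image of the unit ball. With the mean-value identity, this gives Fréchet differentiability. -/

open Asymptotics Filter Set MeasureTheory Metric Topology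

section General

variable {X Z : Type*} [NormedAddCommGroup X] [NormedSpace ℝ X] [NormedAddCommGroup Z]

theorem ContinuousOn.intervalIntegrable_segment {φ : X → Z} {s : Set X} (hφ : ContinuousOn φ s)
    {x h : X} (hseg : ∀ t ∈ Icc (0 : ℝ) 1, x + t • h ∈ s) :
    IntervalIntegrable (fun t : ℝ => φ (x + t • h)) volume 0 1 := by
  refine ContinuousOn.intervalIntegrable ?_
  rw [uIcc_of_le zero_le_one]
  exact hφ.comp (by fun_prop) hseg

variable [NormedSpace ℝ Z]

theorem IsCompactOperator.continuousOn_comp {S W Y : Type*} [TopologicalSpace S]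
    [NormedAddCommGroup W] [NormedSpace ℝ W] [NormedAddCommGroup Y] [NormedSpace ℝ Y]
    {K : W →L[ℝ] Y} (hK : IsCompactOperator K) {T : S → Y →L[ℝ] Z} {s : Set S}
    (hT : ContinuousOn (fun p : S × Y => T p.1 p.2) (s ×ˢ univ)) :
    ContinuousOn (fun x => (T x).comp K) s := by
  obtain ⟨k, hk, hKk⟩ := hK.image_closedBall_subset_compact 1
  intro x hx
  refine Metric.tendsto_nhds.2 fun ε hε => ?_
  obtain ⟨v, hv, hvk⟩ := hk.mem_uniformity_of_prod (f := fun x y => T x y)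
    (hT.mono (prod_mono subset_rfl (subset_univ k))) hx (dist_mem_uniformity (half_pos hε))
  filter_upwards [hv] with y hy
  rw [dist_eq_norm]
  refine (ContinuousLinearMap.opNorm_le_of_unit_norm (half_pos hε).le fun w hw => ?_).trans_lt
    (half_lt_self hε)
  have hKw : K w ∈ k := hKk ⟨w, by simp [hw], rfl⟩
  have hd : dist (T y (K w)) (T x (K w)) < ε / 2 := hvk y hy (K w) hKw
  rw [dist_eq_norm] at hd
  exact hd.le

theorem sub_eq_integral_of_hasFDerivAt [CompleteSpace Z] {g : X → Z} {A : X → X →L[ℝ] Z}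
    {x h : X} (hg : ∀ t ∈ Icc (0 : ℝ) 1, HasFDerivAt g (A (x + t • h)) (x + t • h))
    (hint : IntervalIntegrable (fun t : ℝ => A (x + t • h) h) volume 0 1) :
    g (x + h) - g x = ∫ t in (0 : ℝ)..1, A (x + t • h) h := by
  have hline : ∀ t ∈ uIcc (0 : ℝ) 1,
      HasDerivAt (fun s : ℝ => g (x + s • h)) (A (x + t • h) h) t := by
    intro t ht
    rw [uIcc_of_le zero_le_one] at ht
    exact (hg t ht).comp_hasDerivAt t (((hasDerivAt_id t).smul_const h).const_add x |>.congr_deriv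
      (one_smul ℝ h))
  rw [intervalIntegral.integral_eq_sub_of_hasDerivAt hline hint]
  simp

theorem hasFDerivAt_of_sub_eq_integral [CompleteSpace Z] {g : X → Z} {A : X → X →L[ℝ] Z}
    {s : Set X} {x : X} (hs : s ∈ 𝓝 x) (hA : ContinuousOn A s)
    (hg : ∀ h, (∀ t ∈ Icc (0 : ℝ) 1, x + t • h ∈ s) →
      g (x + h) - g x = ∫ t in (0 : ℝ)..1, A (x + t • h) h) :
    HasFDerivAt g (A x) x := by
  rw [hasFDerivAt_iff_isLittleO_nhds_zero, isLittleO_iff]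
  intro c hc
  obtain ⟨δ, hδ, hball⟩ : ∃ δ > 0, ∀ y ∈ ball x δ, y ∈ s ∧ dist (A y) (A x) ≤ c :=
    eventually_nhds_iff_ball.1 <|
      inter_mem hs ((hA.continuousAt hs).eventually (closedBall_mem_nhds (A x) hc))
  filter_upwards [ball_mem_nhds 0 hδ] with h hh
  have hseg : ∀ t ∈ Icc (0 : ℝ) 1, x + t • h ∈ ball x δ := fun t ht => by
    rw [mem_ball_zero_iff] at hh
    rw [mem_ball_iff_norm, add_sub_cancel_left, norm_smul, Real.norm_of_nonneg ht.1]
    exact (mul_le_of_le_one_left (norm_nonneg h) ht.2).trans_lt hh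
  have hint : IntervalIntegrable (fun t : ℝ => A (x + t • h) h) volume 0 1 :=
    (hA.clm_apply continuousOn_const).intervalIntegrable_segment fun t ht => (hball _ (hseg t ht)).1
  calc ‖g (x + h) - g x - A x h‖ = ‖∫ t in (0 : ℝ)..1, (A (x + t • h) - A x) h‖ := by
        simp only [sub_apply]
        rw [hg h fun t ht => (hball _ (hseg t ht)).1,
          intervalIntegral.integral_sub hint intervalIntegrable_const]
        simp
    _ ≤ c * ‖h‖ * |1 - 0| := by
        refine intervalIntegral.norm_integral_le_of_norm_le_const fun t ht => ?_
        rw [uIoc_of_le zero_le_one] at ht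
        have := (hball _ (hseg t (Ioc_subset_Icc_self ht))).2
        rw [dist_eq_norm] at this
        exact ((A (x + t • h) - A x).le_opNorm h).trans (by gcongr)
    _ = c * ‖h‖ := by simp

end General

namespace Sc

variable {E F : ℕ → Type} [∀ m, NormedAddCommGroup (E m)] [∀ m, NormedSpace ℝ (E m)]
  [∀ m, NormedAddCommGroup (F m)] [∀ m, NormedSpace ℝ (F m)]
  {ιE : ∀ m, E (m + 1) →L[ℝ] E m} {ιF : ∀ m, F (m + 1) →L[ℝ] F m}
  {U : ∀ m, Set (E m)} {f : ∀ m, E m → F m} {Df : ∀ m, E (m + 1) → E m →L[ℝ] F m}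

theorem isOpen_level (hU0 : IsOpen (U 0)) (hU : ∀ m, U (m + 1) = ιE m ⁻¹' U m) (m : ℕ) :
    IsOpen (U m) := by
  induction m with
  | zero => exact hU0
  | succ m ih => exact hU m ▸ ih.preimage (ιE m).continuous

theorem intervalIntegrable_apply_segment
    (hTsc0 : ∀ m, ContinuousOn (fun p : E (m + 1) × E m => Df m p.1 p.2)
      (U (m + 1) ×ˢ Set.univ))
    {m : ℕ} {x h : E (m + 1)} (hseg : ∀ t ∈ Icc (0 : ℝ) 1, x + t • h ∈ U (m + 1)) (v : E m) :
    IntervalIntegrable (fun t : ℝ => Df m (x + t • h) v) volume 0 1 :=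
  ContinuousOn.intervalIntegrable_segment (φ := fun y => Df m y v)
    ((hTsc0 m).comp (continuous_id.prodMk continuous_const).continuousOn
      fun _ hy => ⟨hy, mem_univ v⟩) hseg

theorem hasFDerivAt_zero
    (happrox : ∀ x ∈ U 1,
      (fun h : E 1 => f 0 (ιE 0 x + ιE 0 h) - f 0 (ιE 0 x) - Df 0 x (ιE 0 h))
        =o[𝓝 (0 : E 1)] fun h : E 1 => h)
    {x : E 1} (hx : x ∈ U 1) :
    HasFDerivAt (fun y : E 1 => f 0 (ιE 0 y)) ((Df 0 x).comp (ιE 0)) x := by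
  rw [hasFDerivAt_iff_isLittleO_nhds_zero]
  simpa only [map_add, ContinuousLinearMap.comp_apply] using happrox x hx

variable [∀ m, CompleteSpace (F m)]

theorem sub_eq_integral
    (hinjF : ∀ m, Function.Injective (ιF m)) (hU : ∀ m, U (m + 1) = ιE m ⁻¹' U m)
    (hcompat : ∀ m, ∀ x ∈ U (m + 1), ιF m (f (m + 1) x) = f m (ιE m x))
    (hDfcompat : ∀ m, ∀ x ∈ U (m + 2), ∀ h : E (m + 1),
      ιF m (Df (m + 1) x h) = Df m (ιE (m + 1) x) (ιE m h))
    (happrox : ∀ x ∈ U 1,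
      (fun h : E 1 => f 0 (ιE 0 x + ιE 0 h) - f 0 (ιE 0 x) - Df 0 x (ιE 0 h))
        =o[𝓝 (0 : E 1)] fun h : E 1 => h)
    (hTsc0 : ∀ m, ContinuousOn (fun p : E (m + 1) × E m => Df m p.1 p.2)
      (U (m + 1) ×ˢ Set.univ))
    (m : ℕ) {x h : E (m + 1)} (hseg : ∀ t ∈ Icc (0 : ℝ) 1, x + t • h ∈ U (m + 1)) :
    f m (ιE m (x + h)) - f m (ιE m x) = ∫ t in (0 : ℝ)..1, Df m (x + t • h) (ιE m h) := by
  induction m with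
  | zero =>
    exact sub_eq_integral_of_hasFDerivAt (A := fun y => (Df 0 y).comp (ιE 0))
      (fun t ht => hasFDerivAt_zero happrox (hseg t ht))
      (intervalIntegrable_apply_segment hTsc0 hseg _)
  | succ m ih =>
    have hseg' : ∀ t ∈ Icc (0 : ℝ) 1, ιE (m + 1) x + t • ιE (m + 1) h ∈ U (m + 1) :=
      fun t ht => by simpa only [hU (m + 1), mem_preimage, map_add, map_smul] using hseg t ht
    have hx : x ∈ U (m + 2) := by simpa using hseg 0 ⟨le_rfl, zero_le_one⟩
    have hxh : x + h ∈ U (m + 2) := by simpa using hseg 1 ⟨zero_le_one, le_rfl⟩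
    rw [hU (m + 1)] at hx hxh
    apply hinjF m
    rw [map_sub, hcompat m _ hxh, hcompat m _ hx, map_add, ih hseg',
      ← (ιF m).intervalIntegral_comp_comm (intervalIntegrable_apply_segment hTsc0 hseg _)]
    refine intervalIntegral.integral_congr fun t ht => ?_
    rw [uIcc_of_le zero_le_one] at ht
    simp only [hDfcompat m _ (hseg t ht), map_add, map_smul]

end Sc

theorem stmt4_general
    (E F : ℕ → Type) [∀ m, NormedAddCommGroup (E m)] [∀ m, NormedSpace ℝ (E m)]
    [∀ m, NormedAddCommGroup (F m)] [∀ m, NormedSpace ℝ (F m)]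
    [∀ m, CompleteSpace (F m)]
    (ιE : ∀ m, E (m + 1) →L[ℝ] E m) (ιF : ∀ m, F (m + 1) →L[ℝ] F m)
    (hinjF : ∀ m, Function.Injective (ιF m))
    (hcompE : ∀ m, IsCompactOperator (ιE m))
    (U : ∀ m, Set (E m)) (hU0 : IsOpen (U 0)) (hU : ∀ m, U (m + 1) = ιE m ⁻¹' U m)
    (f : ∀ m, E m → F m)
    (hcompat : ∀ m, ∀ x ∈ U (m + 1), ιF m (f (m + 1) x) = f m (ιE m x))
    (Df : ∀ m, E (m + 1) → E m →L[ℝ] F m)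
    (hDfcompat : ∀ m, ∀ x ∈ U (m + 2), ∀ h : E (m + 1),
      ιF m (Df (m + 1) x h) = Df m (ιE (m + 1) x) (ιE m h))
    (happrox : ∀ x ∈ U 1,
      (fun h : E 1 => f 0 (ιE 0 x + ιE 0 h) - f 0 (ιE 0 x) - Df 0 x (ιE 0 h))
        =o[nhds (0 : E 1)] fun h : E 1 => h)
    (hTsc0 : ∀ m, ContinuousOn (fun p : E (m + 1) × E m => Df m p.1 p.2)
      (U (m + 1) ×ˢ Set.univ)) :
    ∀ m, (∀ x ∈ U (m + 1),
        HasFDerivAt (fun y : E (m + 1) => f m (ιE m y)) ((Df m x).comp (ιE m)) x) ∧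
      ContinuousOn (fun x : E (m + 1) => (Df m x).comp (ιE m)) (U (m + 1)) := by
  intro m
  have hcont : ContinuousOn (fun x => (Df m x).comp (ιE m)) (U (m + 1)) :=
    (hcompE m).continuousOn_comp (hTsc0 m)
  refine ⟨fun x hx => ?_, hcont⟩
  exact hasFDerivAt_of_sub_eq_integral ((Sc.isOpen_level hU0 hU (m + 1)).mem_nhds hx) hcont
    fun _ hseg => Sc.sub_eq_integral hinjF hU hcompat hDfcompat happrox hTsc0 m hseg

/-- An sc-structure is modelled by a nested sequence of Banach spaces
`E 0 ⊃ E 1 ⊃ ⋯` given as a family of normed spaces with injective compact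
continuous linear inclusions `ιE m : E (m+1) → E m`; `U m ⊂ E m` are the induced
(relatively open) level sets `U (m+1) = ιE m ⁻¹ (U m)`.  An sc⁰-map `f` is given
by its level maps `f m : E m → F m` (compatible with the inclusions and continuous
on every level).  The sc¹-hypothesis consists of the linearizations
`Df m x : E m →L F m` for base points `x` on level `m+1`, the approximation
property at level `0`, and sc⁰-continuity of the tangent map.  Conclusion: for
every `m ≥ 1`, the induced map `f : U_m → F_{m-1}` is of class `C¹` with derivative
`Df(x)` restricted to `E_m` (stated here with `m+1` in place of `m`). -/
theorem stmt4
    (E F : ℕ → Type) [∀ m, NormedAddCommGroup (E m)] [∀ m, NormedSpace ℝ (E m)]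
    [∀ m, NormedAddCommGroup (F m)] [∀ m, NormedSpace ℝ (F m)]
    [∀ m, CompleteSpace (E m)] [∀ m, CompleteSpace (F m)]
    (ιE : ∀ m, E (m + 1) →L[ℝ] E m) (ιF : ∀ m, F (m + 1) →L[ℝ] F m)
    (hinjE : ∀ m, Function.Injective (ιE m)) (hinjF : ∀ m, Function.Injective (ιF m))
    (hcompE : ∀ m, IsCompactOperator (ιE m)) (hcompF : ∀ m, IsCompactOperator (ιF m))
    (U : ∀ m, Set (E m)) (hU0 : IsOpen (U 0)) (hU : ∀ m, U (m + 1) = ιE m ⁻¹' U m)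
    (f : ∀ m, E m → F m)
    (hcompat : ∀ m, ∀ x ∈ U (m + 1), ιF m (f (m + 1) x) = f m (ιE m x))
    (hsc0 : ∀ m, ContinuousOn (f m) (U m))
    (Df : ∀ m, E (m + 1) → E m →L[ℝ] F m)
    (hDfcompat : ∀ m, ∀ x ∈ U (m + 2), ∀ h : E (m + 1),
      ιF m (Df (m + 1) x h) = Df m (ιE (m + 1) x) (ιE m h))
    (happrox : ∀ x ∈ U 1,
      (fun h : E 1 => f 0 (ιE 0 x + ιE 0 h) - f 0 (ιE 0 x) - Df 0 x (ιE 0 h))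
        =o[nhds (0 : E 1)] fun h : E 1 => h)
    (hTsc0 : ∀ m, ContinuousOn (fun p : E (m + 1) × E m => Df m p.1 p.2)
      (U (m + 1) ×ˢ Set.univ)) :
    ∀ m, (∀ x ∈ U (m + 1),
        HasFDerivAt (fun y : E (m + 1) => f m (ιE m y)) ((Df m x).comp (ιE m)) x) ∧
      ContinuousOn (fun x : E (m + 1) => (Df m x).comp (ιE m)) (U (m + 1)) :=
  stmt4_general E F ιE ιF hinjF hcompE U hU0 hU f hcompat Df hDfcompat happrox hTsc0
end

section
/- Let E be a Banach space and N a closed subspace of ℝⁿ ⊕ W possessing a closed complement M contained in {0} ⊕ W. Then N decomposes as the direct sum N = N₁ ⊕ N₂, where N₁ = N ∩ ({0} ⊕ W) and N₂ = {(q,p) ∈ N : (0,p) ∈ M}. -/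
/-- Let `N` be a closed subspace of `ℝⁿ ⊕ W` possessing a closed complement `M`
contained in `{0} ⊕ W`.  Then `N = N₁ ⊕ N₂` where `N₁ = N ∩ ({0} ⊕ W)` and
`N₂ = {(q,p) ∈ N : (0,p) ∈ M}`. -/
theorem stmt7 {W : Type*} [NormedAddCommGroup W] [NormedSpace ℝ W] [CompleteSpace W]
    (n : ℕ) (N M : Submodule ℝ ((Fin n → ℝ) × W))
    (hNc : IsClosed (N : Set ((Fin n → ℝ) × W)))
    (hMc : IsClosed (M : Set ((Fin n → ℝ) × W)))
    (hMW : ∀ x ∈ M, x.1 = 0)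
    (hcompl : IsCompl N M) :
    (N ⊓ LinearMap.ker (LinearMap.fst ℝ (Fin n → ℝ) W)) ⊓
      (N ⊓ Submodule.comap
        ((LinearMap.inr ℝ (Fin n → ℝ) W).comp (LinearMap.snd ℝ (Fin n → ℝ) W)) M) = ⊥ ∧
    (N ⊓ LinearMap.ker (LinearMap.fst ℝ (Fin n → ℝ) W)) ⊔
      (N ⊓ Submodule.comap
        ((LinearMap.inr ℝ (Fin n → ℝ) W).comp (LinearMap.snd ℝ (Fin n → ℝ) W)) M) = N := by
  constructor
  · -- trivial intersection
    rw [Submodule.eq_bot_iff]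
    rintro x ⟨⟨hxN, hx1⟩, -, hxM⟩
    have hx1' : x.1 = 0 := hx1
    have hxM' : ((0 : Fin n → ℝ), x.2) ∈ M := hxM
    have hx : x = (0, x.2) := by ext <;> simp [hx1']
    have : x ∈ N ⊓ M := ⟨hxN, by rw [hx]; exact hxM'⟩
    rwa [hcompl.inf_eq_bot, Submodule.mem_bot] at this
  · apply le_antisymm
    · exact sup_le inf_le_left inf_le_left
    · intro x hxN
      -- decompose (0, x.2) = a + b with a ∈ N, b ∈ M
      have htop : ((0 : Fin n → ℝ), x.2) ∈ N ⊔ M := by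
        rw [hcompl.sup_eq_top]; trivial
      rw [Submodule.mem_sup] at htop
      obtain ⟨a, haN, b, hbM, hab⟩ := htop
      have hb1 : b.1 = 0 := hMW b hbM
      have ha1 : a.1 = 0 := by
        have := congrArg Prod.fst hab
        simpa [hb1] using this
      have ha2 : a.2 + b.2 = x.2 := congrArg Prod.snd hab
      refine Submodule.mem_sup.2 ⟨a, ⟨haN, ?_⟩, x - a, ⟨⟨N.sub_mem hxN haN, ?_⟩, ?_⟩⟩
      · simpa using ha1
      · show ((0 : Fin n → ℝ), (x - a).2) ∈ M
        have hb : b = ((0 : Fin n → ℝ), b.2) := by ext <;> simp [hb1]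
        have : (x - a).2 = b.2 := by
          rw [Prod.snd_sub, ← ha2]; abel
        rw [this, ← hb]; exact hbM
      · abel
end

section
/- The degeneracy index d_C(x) = #{i : r_i = 0} of a point x in a partial quadrant C, computed via any linear sc-isomorphism T:E → ℝ^k ⊕ W with T(C) = [0,∞)^k ⊕ W and T(x) = (r₁,...,r_k,w), is independent of the choice of T. -/
private lemma pq_mem_iff {E W : Type*} [NormedAddCommGroup E] [NormedSpace ℝ E]
    [NormedAddCommGroup W] [NormedSpace ℝ W] {k : ℕ}
    (T : E ≃L[ℝ] (Fin k → ℝ) × W) {C : Set E}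
    (hC : T '' C = {p : (Fin k → ℝ) × W | ∀ i, 0 ≤ p.1 i}) (y : E) :
    y ∈ C ↔ ∀ i, 0 ≤ (T y).1 i := by
  constructor
  · intro hy i
    have : T y ∈ T '' C := ⟨y, hy, rfl⟩
    rw [hC] at this
    exact this i
  · intro h
    have : T y ∈ T '' C := by rw [hC]; exact h
    obtain ⟨z, hz, hz'⟩ := this
    rwa [← T.injective hz']

private lemma pq_key {E W : Type*} [NormedAddCommGroup E] [NormedSpace ℝ E]
    [NormedAddCommGroup W] [NormedSpace ℝ W] {k : ℕ}
    (T : E ≃L[ℝ] (Fin k → ℝ) × W) {C : Set E}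
    (hC : T '' C = {p : (Fin k → ℝ) × W | ∀ i, 0 ≤ p.1 i})
    (x v : E) (hx : x ∈ C) :
    (∃ ε : ℝ, 0 < ε ∧ x + ε • v ∈ C ∧ x - ε • v ∈ C) ↔
      ∀ i, (T x).1 i = 0 → (T v).1 i = 0 := by
  classical
  constructor
  · rintro ⟨ε, hε, h1, h2⟩ i hi
    rw [pq_mem_iff T hC] at h1 h2
    have h1 := h1 i
    have h2 := h2 i
    have e1 : (T (x + ε • v)).1 i = (T x).1 i + ε * (T v).1 i := by
      simp [map_add, map_smul]
    have e2 : (T (x - ε • v)).1 i = (T x).1 i - ε * (T v).1 i := by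
      simp [map_sub, map_smul]
    rw [e1, hi] at h1
    rw [e2, hi] at h2
    nlinarith
  · intro h
    have hxC := (pq_mem_iff T hC x).1 hx
    set f : Fin k → ℝ := fun i => if (T v).1 i = 0 then 1 else (T x).1 i / |(T v).1 i|
      with hf
    have hfpos : ∀ i, 0 < f i := by
      intro i
      by_cases hvi : (T v).1 i = 0
      · simp [hf, hvi]
      · have hxi : 0 < (T x).1 i := by
          rcases lt_or_eq_of_le (hxC i) with h' | h'
          · exact h'
          · exact absurd (h i h'.symm) hvi
        simp only [hf, hvi, if_false]
        exact div_pos hxi (abs_pos.2 hvi)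
    set s : Finset ℝ := insert 1 (Finset.univ.image f) with hs
    have hsne : s.Nonempty := ⟨1, by simp [hs]⟩
    set ε : ℝ := s.min' hsne with hε
    have hεpos : 0 < ε := by
      rw [hε, Finset.lt_min'_iff]
      intro b hb
      rw [hs] at hb
      rcases Finset.mem_insert.1 hb with h' | h'
      · rw [h']; norm_num
      · obtain ⟨i, _, hi⟩ := Finset.mem_image.1 h'
        rw [← hi]; exact hfpos i
    have hεle : ∀ i, ε ≤ f i := fun i =>
      s.min'_le _ (by
        rw [hs]
        exact Finset.mem_insert_of_mem (Finset.mem_image_of_mem f (Finset.mem_univ i)))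
    have key : ∀ i, ε * |(T v).1 i| ≤ (T x).1 i := by
      intro i
      by_cases hvi : (T v).1 i = 0
      · simp [hvi]; exact hxC i
      · have := hεle i
        rw [hf] at this
        simp only [hvi, if_false] at this
        have habs : 0 < |(T v).1 i| := abs_pos.2 hvi
        calc ε * |(T v).1 i| ≤ ((T x).1 i / |(T v).1 i|) * |(T v).1 i| := by
              exact mul_le_mul_of_nonneg_right this habs.le
          _ = (T x).1 i := by field_simp
    refine ⟨ε, hεpos, ?_, ?_⟩
    · rw [pq_mem_iff T hC]
      intro i
      have e1 : (T (x + ε • v)).1 i = (T x).1 i + ε * (T v).1 i := by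
        simp [map_add, map_smul]
      rw [e1]
      have := key i
      have h2 := neg_abs_le ((T v).1 i)
      nlinarith
    · rw [pq_mem_iff T hC]
      intro i
      have e2 : (T (x - ε • v)).1 i = (T x).1 i - ε * (T v).1 i := by
        simp [map_sub, map_smul]
      rw [e2]
      have := key i
      have h2 := le_abs_self ((T v).1 i)
      nlinarith

private def pq_phi {E W : Type*} [NormedAddCommGroup E] [NormedSpace ℝ E]
    [NormedAddCommGroup W] [NormedSpace ℝ W] {k : ℕ}
    (T : E ≃L[ℝ] (Fin k → ℝ) × W) (x : E) :
    E →ₗ[ℝ] ({i : Fin k // (T x).1 i = 0} → ℝ) where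
  toFun v := fun j => (T v).1 j.1
  map_add' a b := by funext j; simp
  map_smul' c a := by funext j; simp

private lemma pq_phi_surj {E W : Type*} [NormedAddCommGroup E] [NormedSpace ℝ E]
    [NormedAddCommGroup W] [NormedSpace ℝ W] {k : ℕ}
    (T : E ≃L[ℝ] (Fin k → ℝ) × W) (x : E) :
    Function.Surjective (pq_phi T x) := by
  classical
  intro g
  refine ⟨T.symm ((fun i => if h : (T x).1 i = 0 then g ⟨i, h⟩ else 0), 0), ?_⟩
  funext j
  show (T (T.symm _)).1 j.1 = g j
  rw [T.apply_symm_apply]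
  simp [j.2]

private lemma pq_ker {E W : Type*} [NormedAddCommGroup E] [NormedSpace ℝ E]
    [NormedAddCommGroup W] [NormedSpace ℝ W] {k : ℕ}
    (T : E ≃L[ℝ] (Fin k → ℝ) × W) {C : Set E}
    (hC : T '' C = {p : (Fin k → ℝ) × W | ∀ i, 0 ≤ p.1 i})
    (x : E) (hx : x ∈ C) (v : E) :
    v ∈ LinearMap.ker (pq_phi T x) ↔
      (∃ ε : ℝ, 0 < ε ∧ x + ε • v ∈ C ∧ x - ε • v ∈ C) := by
  rw [pq_key T hC x v hx, LinearMap.mem_ker]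
  constructor
  · intro h i hi
    exact congrFun h ⟨i, hi⟩
  · intro h
    funext j
    exact h j.1 j.2

/-- The degeneracy index `d_C(x) = #{i : rᵢ = 0}` of a point `x` of a partial
quadrant `C`, computed via any linear isomorphism `T : E → ℝ^k ⊕ W` carrying `C`
onto `[0,∞)^k ⊕ W` with `T(x) = (r₁,…,r_k,w)`, is independent of the choice of
the presentation `(k, W, T)`. -/
theorem stmt18 {E W W' : Type*} [NormedAddCommGroup E] [NormedSpace ℝ E]
    [NormedAddCommGroup W] [NormedSpace ℝ W]
    [NormedAddCommGroup W'] [NormedSpace ℝ W']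
    (k k' : ℕ)
    (T : E ≃L[ℝ] (Fin k → ℝ) × W) (T' : E ≃L[ℝ] (Fin k' → ℝ) × W')
    (C : Set E)
    (hC : T '' C = {p : (Fin k → ℝ) × W | ∀ i, 0 ≤ p.1 i})
    (hC' : T' '' C = {p : (Fin k' → ℝ) × W' | ∀ i, 0 ≤ p.1 i}) :
    ∀ x ∈ C,
      Nat.card {i : Fin k // (T x).1 i = 0} =
      Nat.card {i : Fin k' // (T' x).1 i = 0} := by
  classical
  intro x hx
  have hker : LinearMap.ker (pq_phi T x) = LinearMap.ker (pq_phi T' x) := by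
    ext v
    rw [pq_ker T hC x hx v, pq_ker T' hC' x hx v]
  have e1 := (pq_phi T x).quotKerEquivOfSurjective (pq_phi_surj T x)
  have e2 := (pq_phi T' x).quotKerEquivOfSurjective (pq_phi_surj T' x)
  have h1 : Module.finrank ℝ (E ⧸ LinearMap.ker (pq_phi T x)) =
      Nat.card {i : Fin k // (T x).1 i = 0} := by
    rw [e1.finrank_eq, Module.finrank_fintype_fun_eq_card, Nat.card_eq_fintype_card]
  have h2 : Module.finrank ℝ (E ⧸ LinearMap.ker (pq_phi T' x)) =
      Nat.card {i : Fin k' // (T' x).1 i = 0} := by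
    rw [e2.finrank_eq, Module.finrank_fintype_fun_eq_card, Nat.card_eq_fintype_card]
  rw [← h1, ← h2, hker]
end
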